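/- Let E be a set of parametric b-measures on ℝ^N with respect to {ω_j}_{j≥1} with bounded l-bounds (for each j there is c_j > 0 and a choice of l-bounds l_j^ν, ν ∈ E, with l_j^ν([t,t+1]) ≤ c_j for all t ∈ ℝ and ν ∈ E), and let Θ = {θ_j^I} be a suitable set of moduli of continuity. Fix an interval I = [q₁,q₂] with rational endpoints and an integer j ≥ 1. Then for every ε > 0 there is δ(ε) > 0 such that for every tagged δ(ε)-partition Δ = {(τ_i,[t_i,t_{i+1}]) : i=1,…,k−1} of I, every y(·) ∈ 𝒦_j^I, and every ν ∈ E: |∫_I dν_{y(s)} − Σ_{i=1}^{k−1} ν_{y(τ_i)}([t_i,t_{i+1}])| < ε. -/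

import Mathlib

open MeasureTheory Set Filter Topology

/-- A (continuous real) b-measure: a set function on the bounded Borel subsets of `ℝ`
which vanishes on `∅`, is countably additive over countable pairwise disjoint families
of bounded Borel sets with bounded union, and vanishes on singletons. -/
structure IsBMeasure (μ : Set ℝ → ℝ) : Prop where
  empty : μ ∅ = 0
  countably_additive : ∀ A : ℕ → Set ℝ, (∀ n, MeasurableSet (A n)) →
    (∀ n, Bornology.IsBounded (A n)) → Pairwise (Function.onFun Disjoint A) →
    Bornology.IsBounded (⋃ n, A n) →
    HasSum (fun n => μ (A n)) (μ (⋃ n, A n))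
  singleton : ∀ t : ℝ, μ {t} = 0

/-- A locally finite atomless Borel measure on `ℝ`. -/
def GoodMeasure (m : Measure ℝ) : Prop :=
  IsLocallyFiniteMeasure m ∧ ∀ t : ℝ, m {t} = 0

/-- `P` is a finite Borel partition of `A`. -/
def IsBorelPartition (A : Set ℝ) {n : ℕ} (P : Fin n → Set ℝ) : Prop :=
  (∀ i, MeasurableSet (P i)) ∧ Pairwise (Function.onFun Disjoint P) ∧ (⋃ i, P i) = A

/-- `|μ| ≤ m` : total-variation bound of the set function `μ` by the measure `m`,
expressed through finite Borel partitions of bounded Borel sets. -/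
def TVLE (μ : Set ℝ → ℝ) (m : Measure ℝ) : Prop :=
  ∀ A : Set ℝ, Bornology.IsBounded A → MeasurableSet A →
    ∀ (n : ℕ) (P : Fin n → Set ℝ), IsBorelPartition A P →
      ∑ i, |μ (P i)| ≤ (m A).toReal

/-- Partition-sum bound `Σ |μ₁(Aᵢ) - μ₂(Aᵢ)| ≤ c · l(A)` for the difference of two
set functions, over finite Borel partitions of bounded Borel sets. -/
def DiffLE (μ₁ μ₂ : Set ℝ → ℝ) (c : ℝ) (l : Measure ℝ) : Prop :=
  ∀ A : Set ℝ, Bornology.IsBounded A → MeasurableSet A →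
    ∀ (n : ℕ) (P : Fin n → Set ℝ), IsBorelPartition A P →
      ∑ i, |μ₁ (P i) - μ₂ (P i)| ≤ c * (l A).toReal

variable {E : Type*} [NormedAddCommGroup E]

/-- `m` is an m-bound of `ν` on the closed ball of radius `j`. -/
def HasMBound (ν : E → Set ℝ → ℝ) (j : ℕ) (m : Measure ℝ) : Prop :=
  GoodMeasure m ∧ ∀ y : E, ‖y‖ ≤ (j : ℝ) → TVLE (ν y) m

/-- `l` is an l-bound of `ν` on the closed ball of radius `j`, for the modulus `ω`. -/
def HasLBound (ω : ℝ → ℝ) (ν : E → Set ℝ → ℝ) (j : ℕ) (l : Measure ℝ) : Prop :=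
  GoodMeasure l ∧ ∀ y₁ y₂ : E, ‖y₁‖ ≤ (j : ℝ) → ‖y₂‖ ≤ (j : ℝ) →
    DiffLE (ν y₁) (ν y₂) (ω ‖y₁ - y₂‖) l

/-- A non-decreasing family of moduli of continuity `{ω_j}`. -/
structure IsModulusFamily (ω : ℕ → ℝ → ℝ) : Prop where
  continuousOn : ∀ j, ContinuousOn (ω j) (Ici 0)
  monotoneOn : ∀ j, MonotoneOn (ω j) (Ici 0)
  map_zero : ∀ j, ω j 0 = 0
  nonneg : ∀ j x, 0 ≤ x → 0 ≤ ω j x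
  mono_index : ∀ j x, 0 ≤ x → ω j x ≤ ω (j + 1) x

/-- A parametric b-measure on `E` with respect to the family of moduli `ω`. -/
def IsParamBMeasure (ω : ℕ → ℝ → ℝ) (ν : E → Set ℝ → ℝ) : Prop :=
  (∀ y, IsBMeasure (ν y)) ∧
    ∀ j : ℕ, 1 ≤ j → ∃ m l : Measure ℝ, HasMBound ν j m ∧ HasLBound (ω j) ν j l

/-- A tagged partition of `[a,b]`. -/
structure TaggedPartition (a b : ℝ) where
  k : ℕ
  k_pos : 0 < k
  t : ℕ → ℝ
  tag : ℕ → ℝ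
  left : t 0 = a
  right : t k = b
  lt : ∀ i < k, t i < t (i + 1)
  tag_mem : ∀ i < k, tag i ∈ Set.Icc (t i) (t (i + 1))

/-- The mesh of the tagged partition is `< δ`. -/
def TaggedPartition.MeshLT {a b : ℝ} (P : TaggedPartition a b) (δ : ℝ) : Prop :=
  ∀ i < P.k, P.t (i + 1) - P.t i < δ

/-- The Riemann sum of the parametric b-measure `ν` along the curve `y` over the
tagged partition `P`. -/
def RiemannSum (ν : E → Set ℝ → ℝ) (y : ℝ → E) {a b : ℝ} (P : TaggedPartition a b) : ℝ :=
  ∑ i ∈ Finset.range P.k, ν (y (P.tag i)) (Set.Icc (P.t i) (P.t (i + 1)))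

/-- `L = ∫_a^b dν_{y(s)}` : `L` is the limit of the Riemann sums of `ν` along `y`
over tagged partitions of `[a,b]` as the mesh tends to `0`. -/
def IsCurveIntegral (ν : E → Set ℝ → ℝ) (y : ℝ → E) (a b : ℝ) (L : ℝ) : Prop :=
  ∀ ε > 0, ∃ δ > 0, ∀ P : TaggedPartition a b, P.MeshLT δ → |L - RiemannSum ν y P| < ε

/-- A suitable set of moduli of continuity `Θ = {θ_j^{[q₁,q₂]}}`. -/
structure IsSuitableModuli (Θ : ℕ → ℚ → ℚ → ℝ → ℝ) : Prop where
  continuousOn : ∀ (j : ℕ) (q₁ q₂ : ℚ), q₁ < q₂ → ContinuousOn (Θ j q₁ q₂) (Ici 0)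
  monotoneOn : ∀ (j : ℕ) (q₁ q₂ : ℚ), q₁ < q₂ → MonotoneOn (Θ j q₁ q₂) (Ici 0)
  map_zero : ∀ (j : ℕ) (q₁ q₂ : ℚ), q₁ < q₂ → Θ j q₁ q₂ 0 = 0
  nonneg : ∀ (j : ℕ) (q₁ q₂ : ℚ) (x : ℝ), q₁ < q₂ → 0 ≤ x → 0 ≤ Θ j q₁ q₂ x
  mono : ∀ (j₁ j₂ : ℕ) (q₁ q₂ p₁ p₂ : ℚ), j₁ ≤ j₂ → q₁ ≤ p₁ → p₁ < p₂ → p₂ ≤ q₂ →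
    ∀ x : ℝ, 0 ≤ x → Θ j₁ p₁ p₂ x ≤ Θ j₂ q₁ q₂ x

/-- The set `𝒦_j^I` of continuous functions `y : I → E`, `I = [q₁,q₂]`, bounded by `j`
and admitting `θ_j^I` as modulus of continuity. -/
def KSet (E : Type*) [NormedAddCommGroup E] (Θ : ℕ → ℚ → ℚ → ℝ → ℝ)
    (j : ℕ) (q₁ q₂ : ℚ) : Set (ℝ → E) :=
  {y | ContinuousOn y (Set.Icc (q₁ : ℝ) (q₂ : ℝ)) ∧
    (∀ t ∈ Set.Icc (q₁ : ℝ) (q₂ : ℝ), ‖y t‖ ≤ (j : ℝ)) ∧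
    ∀ t₁ ∈ Set.Icc (q₁ : ℝ) (q₂ : ℝ), ∀ t₂ ∈ Set.Icc (q₁ : ℝ) (q₂ : ℝ),
      ‖y t₁ - y t₂‖ ≤ Θ j q₁ q₂ |t₁ - t₂|}

/-- Convergence `ν_n → ν₀` in the topology `σ_Θ` : the integrals along curves of
`𝒦_j^I` converge uniformly, for every `j` and every compact interval `I` with
rational endpoints. -/
def SigmaThetaTendsto {E : Type*} [NormedAddCommGroup E] (Θ : ℕ → ℚ → ℚ → ℝ → ℝ)
    (ν : ℕ → E → Set ℝ → ℝ) (ν₀ : E → Set ℝ → ℝ) : Prop :=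
  ∀ (j : ℕ) (q₁ q₂ : ℚ), q₁ < q₂ → ∀ ε > 0, ∃ n₀ : ℕ, ∀ n ≥ n₀,
    ∀ y ∈ KSet E Θ j q₁ q₂, ∀ L L₀ : ℝ,
      IsCurveIntegral (ν n) y (q₁ : ℝ) (q₂ : ℝ) L →
      IsCurveIntegral ν₀ y (q₁ : ℝ) (q₂ : ℝ) L₀ → |L - L₀| < ε

/-- The time-translate `ν·t` of a parametric b-measure: `(ν·t)_y(A) = ν_y(A + t)`. -/
def BTranslate (ν : E → Set ℝ → ℝ) (t : ℝ) : E → Set ℝ → ℝ :=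
  fun y A => ν y ((fun s => s + t) '' A)

/-- The time-translate `m·t` of a Borel measure: `(m·t)(A) = m(A + t)`. -/
noncomputable def MTranslate (m : Measure ℝ) (t : ℝ) : Measure ℝ :=
  Measure.map (fun s => s - t) m

/-- An N-dimensional parametric b-measure on `E` with common m-bounds `m j` and
common Lipschitz l-bounds `l j`. -/
def IsNDimParamBMeasure {M : ℕ} (νbar : Fin M → E → Set ℝ → ℝ)
    (m l : ℕ → Measure ℝ) : Prop :=
  (∀ i y, IsBMeasure (νbar i y)) ∧
    ∀ j : ℕ, 1 ≤ j → GoodMeasure (m j) ∧ GoodMeasure (l j) ∧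
      (∀ i, ∀ y : E, ‖y‖ ≤ (j : ℝ) → TVLE (νbar i y) (m j)) ∧
      (∀ i, ∀ y₁ y₂ : E, ‖y₁‖ ≤ (j : ℝ) → ‖y₂‖ ≤ (j : ℝ) →
        DiffLE (νbar i y₁) (νbar i y₂) ‖y₁ - y₂‖ (l j))

/-- The oriented curve integral: `∫_b^a := -∫_a^b`. -/
def IsSignedCurveIntegral (ν : E → Set ℝ → ℝ) (y : ℝ → E) (a b : ℝ) (L : ℝ) : Prop :=
  (a ≤ b ∧ IsCurveIntegral ν y a b L) ∨ (b < a ∧ IsCurveIntegral ν y b a (-L))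

/-- `y` is a solution on `S` of the Cauchy problem `y' = ν̄_y`, `y(t₀) = y₀`, for the
N-dimensional parametric b-measure `ν̄`: componentwise,
`y_i(t) = y_{0,i} + ∫_{t₀}^t dν^i_{y(s)}`. -/
def IsSolutionOn {M : ℕ} (νbar : Fin M → EuclideanSpace ℝ (Fin M) → Set ℝ → ℝ)
    (t₀ : ℝ) (y₀ : EuclideanSpace ℝ (Fin M)) (S : Set ℝ)
    (y : ℝ → EuclideanSpace ℝ (Fin M)) : Prop :=
  t₀ ∈ S ∧ y t₀ = y₀ ∧ ContinuousOn y S ∧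
    ∀ t ∈ S, ∀ i : Fin M, IsSignedCurveIntegral (νbar i) y t₀ t (y t i - y₀ i)

/-- `y` is the maximal (noncontinuable) solution, defined on the open interval `S`:
every solution on an interval containing `t₀` is a restriction of `y`. -/
def IsMaximalSolution {M : ℕ} (νbar : Fin M → EuclideanSpace ℝ (Fin M) → Set ℝ → ℝ)
    (t₀ : ℝ) (y₀ : EuclideanSpace ℝ (Fin M)) (S : Set ℝ)
    (y : ℝ → EuclideanSpace ℝ (Fin M)) : Prop :=
  IsSolutionOn νbar t₀ y₀ S y ∧ IsOpen S ∧ S.OrdConnected ∧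
    ∀ S' : Set ℝ, S'.OrdConnected → ∀ z, IsSolutionOn νbar t₀ y₀ S' z →
      S' ⊆ S ∧ Set.EqOn z y S'

/-! Refine a `δ`-fine tagged partition `P` uniformly, with left-endpoint tags, until its Riemann
sum is `ε/2`-close to the integral. Cell by cell, the Riemann sum of `P` and that of the refinement
differ only in the tags, which are at most `δ` apart; along `y ∈ 𝒦_j^I` the l-bound therefore
bounds the difference by `ω_j(θ_j^I(δ)) · l_j(I)`, and the bounded l-bounds give
`l_j(I) ≤ (⌊|I|⌋ + 1) c_j` for every `ν`. So `δ` depends neither on `P`, nor on `y`, nor on `ν`. -/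

namespace IsBMeasure

variable {μ : Set ℝ → ℝ}

theorem union (h : IsBMeasure μ) {A B : Set ℝ} (hA : MeasurableSet A) (hB : MeasurableSet B)
    (hAb : Bornology.IsBounded A) (hBb : Bornology.IsBounded B) (hAB : Disjoint A B) :
    μ (A ∪ B) = μ A + μ B := by
  let C : ℕ → Set ℝ := fun n => if n = 0 then A else if n = 1 then B else ∅
  have hC : ⋃ n, C n = A ∪ B := by
    ext x
    simp only [C, mem_iUnion, mem_union]
    constructor
    · rintro ⟨_ | _ | n, hx⟩ <;> simp_all
    · rintro (hx | hx)
      exacts [⟨0, by simpa⟩, ⟨1, by simpa⟩]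
  have hsum := h.countably_additive C
    (fun n => by rcases n with _ | _ | n <;> simp [C, hA, hB])
    (fun n => by rcases n with _ | _ | n <;> simp [C, hAb, hBb])
    (fun m n hmn => by
      rcases m with _ | _ | m <;> rcases n with _ | _ | n <;>
        simp_all [C, Function.onFun, hAB.symm])
    (hC ▸ hAb.union hBb)
  rw [hC] at hsum
  have hfin : HasSum (fun n => μ (C n)) (∑ n ∈ Finset.range 2, μ (C n)) :=
    hasSum_sum_of_ne_finset_zero fun n hn => by rcases n with _ | _ | n <;> simp_all [C, h.empty]
  simpa [Finset.sum_range_succ, C] using hsum.unique hfin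

theorem Icc_eq_Ioc (h : IsBMeasure μ) {a b : ℝ} (hab : a ≤ b) : μ (Icc a b) = μ (Ioc a b) := by
  rw [← Ioc_insert_left hab, insert_eq, h.union (measurableSet_singleton a) measurableSet_Ioc
    Bornology.isBounded_singleton (Metric.isBounded_Ioc _ _) (by simp), h.singleton, zero_add]

theorem Ioc_union_Ioc (h : IsBMeasure μ) {a b c : ℝ} (hab : a ≤ b) (hbc : b ≤ c) :
    μ (Ioc a c) = μ (Ioc a b) + μ (Ioc b c) := by
  rw [← Ioc_union_Ioc_eq_Ioc hab hbc, h.union measurableSet_Ioc measurableSet_Ioc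
    (Metric.isBounded_Ioc _ _) (Metric.isBounded_Ioc _ _) (Ioc_disjoint_Ioc_of_le le_rfl)]

end IsBMeasure

theorem sum_range_Ioc_telescope {β : Type*} [AddCommMonoid β] {f : Set ℝ → β}
    (h_empty : f ∅ = 0)
    (h_add : ∀ a b c, a ≤ b → b ≤ c → f (Ioc a c) = f (Ioc a b) + f (Ioc b c))
    {u : ℕ → ℝ} {n : ℕ} (hu : MonotoneOn u (Iic n)) :
    ∑ r ∈ Finset.range n, f (Ioc (u r) (u (r + 1))) = f (Ioc (u 0) (u n)) := by
  induction n with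
  | zero => simp [h_empty]
  | succ n ih =>
    rw [Finset.sum_range_succ, ih (hu.mono (Iic_subset_Iic.2 n.le_succ)),
      h_add _ _ _ (hu (by simp) (by simp) n.zero_le) (hu (by simp) (by simp) n.le_succ)]

theorem measureReal_Ioc_union_Ioc {l : Measure ℝ} [IsLocallyFiniteMeasure l] {a b c : ℝ}
    (hab : a ≤ b) (hbc : b ≤ c) : l.real (Ioc a c) = l.real (Ioc a b) + l.real (Ioc b c) := by
  rw [← Ioc_union_Ioc_eq_Ioc hab hbc,
    measureReal_union (Ioc_disjoint_Ioc_of_le le_rfl) measurableSet_Ioc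
    measure_Ioc_lt_top.ne measure_Ioc_lt_top.ne]

theorem Finset.sum_range_mul_eq_sum_sum {M : Type*} [AddCommMonoid M] (f : ℕ → M) (n k : ℕ) :
    ∑ m ∈ Finset.range (n * k), f m = ∑ i ∈ Finset.range k, ∑ r ∈ Finset.range n, f (n * i + r) := by
  induction k with
  | zero => simp
  | succ k ih => rw [Nat.mul_succ, Finset.sum_range_add, ih, Finset.sum_range_succ]

namespace TaggedPartition

variable {a b : ℝ} (P : TaggedPartition a b)

theorem monotoneOn_t : MonotoneOn P.t (Iic P.k) :=
  monotoneOn_of_le_succ ordConnected_Iic fun i _ _ hi => by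
    rw [Order.succ_eq_add_one] at hi ⊢
    exact (P.lt i (Nat.lt_of_succ_le hi)).le

theorem t_mem_Icc {i : ℕ} (hi : i ≤ P.k) : P.t i ∈ Icc a b := by
  refine ⟨?_, ?_⟩
  · simpa [P.left] using P.monotoneOn_t (Nat.zero_le P.k) hi (Nat.zero_le i)
  · simpa [P.right] using P.monotoneOn_t hi (le_refl P.k) hi

theorem Icc_subset_Icc_of_lt {i : ℕ} (hi : i < P.k) : Icc (P.t i) (P.t (i + 1)) ⊆ Icc a b :=
  Icc_subset_Icc (P.t_mem_Icc hi.le).1 (P.t_mem_Icc hi).2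

theorem abs_tag_sub_le {i : ℕ} (hi : i < P.k) {s : ℝ} (hs : s ∈ Icc (P.t i) (P.t (i + 1))) :
    |P.tag i - s| ≤ P.t (i + 1) - P.t i := by
  have htag := P.tag_mem i hi
  exact abs_sub_le_iff.2 ⟨by linarith [hs.1, htag.2], by linarith [hs.2, htag.1]⟩

/-- The `r`-th of the `n` equally spaced points cutting the `i`-th cell of `P` sits at index
`n * i + r`. -/
noncomputable def refinePoint (n m : ℕ) : ℝ :=
  P.t (m / n) + (m % n : ℕ) * (P.t (m / n + 1) - P.t (m / n)) / n

theorem refinePoint_mul {n : ℕ} (hn : 0 < n) (i : ℕ) : P.refinePoint n (n * i) = P.t i := by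
  simp [refinePoint, Nat.mul_div_cancel_left i hn]

theorem refinePoint_mul_add {n : ℕ} (hn : 0 < n) (i : ℕ) {r : ℕ} (hr : r ≤ n) :
    P.refinePoint n (n * i + r) = P.t i + r * (P.t (i + 1) - P.t i) / n := by
  rcases hr.lt_or_eq with hr | rfl
  · simp [refinePoint, Nat.mul_add_div hn, Nat.div_eq_of_lt hr, Nat.mod_eq_of_lt hr]
  · have hn' : (r : ℝ) ≠ 0 := by positivity
    rw [← Nat.mul_add_one, P.refinePoint_mul hn]
    field_simp
    ring

theorem refinePoint_succ_sub {n : ℕ} (hn : 0 < n) (m : ℕ) :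
    P.refinePoint n (m + 1) - P.refinePoint n m = (P.t (m / n + 1) - P.t (m / n)) / n := by
  obtain ⟨q, r, hr, rfl⟩ : ∃ q r, r < n ∧ m = n * q + r :=
    ⟨m / n, m % n, Nat.mod_lt m hn, (Nat.div_add_mod m n).symm⟩
  rw [add_assoc, P.refinePoint_mul_add hn q (Nat.succ_le_of_lt hr),
    P.refinePoint_mul_add hn q hr.le,
    Nat.mul_add_div hn, Nat.div_eq_of_lt hr, add_zero]
  push_cast
  ring

theorem refinePoint_lt_succ {n : ℕ} (hn : 0 < n) {m : ℕ} (hm : m < n * P.k) :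
    P.refinePoint n m < P.refinePoint n (m + 1) := by
  have hcell := P.lt (m / n) ((Nat.div_lt_iff_lt_mul hn).2 (by rwa [mul_comm]))
  have hstep := P.refinePoint_succ_sub hn m
  have : 0 < (P.t (m / n + 1) - P.t (m / n)) / n := div_pos (by linarith) (by positivity)
  linarith

theorem refinePoint_mul_add_mem_Icc {n : ℕ} (hn : 0 < n) {i : ℕ} (hi : i < P.k) {r : ℕ}
    (hr : r ≤ n) : P.refinePoint n (n * i + r) ∈ Icc (P.t i) (P.t (i + 1)) := by
  have hcell := (P.lt i hi).le
  have hrn : (r : ℝ) / n ≤ 1 := div_le_one_of_le₀ (by exact_mod_cast hr) (by positivity)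
  rw [P.refinePoint_mul_add hn i hr, mul_comm, mul_div_assoc]
  have hr0 : 0 ≤ (r : ℝ) / n := by positivity
  constructor <;> nlinarith

theorem monotoneOn_refinePoint_mul_add {n : ℕ} (hn : 0 < n) {i : ℕ} (hi : i < P.k) :
    MonotoneOn (fun r => P.refinePoint n (n * i + r)) (Iic n) := fun r hr r' hr' hrr' => by
  simp only [P.refinePoint_mul_add hn i hr, P.refinePoint_mul_add hn i hr']
  have hcell : P.t i ≤ P.t (i + 1) := (P.lt i hi).le
  gcongr

noncomputable def refine (n : ℕ) (hn : 0 < n) : TaggedPartition a b where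
  k := n * P.k
  k_pos := Nat.mul_pos hn P.k_pos
  t := P.refinePoint n
  tag := P.refinePoint n
  left := by simpa using (P.refinePoint_mul hn 0).trans P.left
  right := (P.refinePoint_mul hn P.k).trans P.right
  lt := fun _ hm => P.refinePoint_lt_succ hn hm
  tag_mem := fun _ hm => ⟨le_rfl, (P.refinePoint_lt_succ hn hm).le⟩

theorem MeshLT.refine {P : TaggedPartition a b} {δ : ℝ} (hP : P.MeshLT δ) {n : ℕ} (hn : 0 < n) :
    (P.refine n hn).MeshLT (δ / n) := fun m hm => by
  change P.refinePoint n (m + 1) - P.refinePoint n m < δ / n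
  rw [P.refinePoint_succ_sub hn m]
  exact div_lt_div_of_pos_right (hP _ ((Nat.div_lt_iff_lt_mul hn).2 (by rwa [mul_comm])))
    (by positivity)

theorem MeshLT.exists_refine {P : TaggedPartition a b} {δ δ₀ : ℝ} (hP : P.MeshLT δ)
    (hδ₀ : 0 < δ₀) : ∃ n, ∃ hn : 0 < n, (P.refine n hn).MeshLT δ₀ := by
  obtain ⟨n, hn⟩ := exists_nat_gt (δ / δ₀)
  refine ⟨n + 1, n.succ_pos, fun m hm => (hP.refine n.succ_pos m hm).trans_le ?_⟩
  rw [div_lt_iff₀ hδ₀] at hn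
  rw [div_le_iff₀ (by positivity), Nat.cast_succ]
  linarith

end TaggedPartition

theorem DiffLE.abs_sub_le {μ₁ μ₂ : Set ℝ → ℝ} {c : ℝ} {l : Measure ℝ} (h : DiffLE μ₁ μ₂ c l)
    {A : Set ℝ} (hAb : Bornology.IsBounded A) (hA : MeasurableSet A) :
    |μ₁ A - μ₂ A| ≤ c * l.real A := by
  simpa [Measure.real] using
    h A hAb hA 1 (fun _ => A) ⟨fun _ => hA, Subsingleton.pairwise, iUnion_const A⟩

theorem DiffLE.mono {μ₁ μ₂ : Set ℝ → ℝ} {c c' : ℝ} {l : Measure ℝ} (h : DiffLE μ₁ μ₂ c l)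
    (hc : c ≤ c') : DiffLE μ₁ μ₂ c' l := fun A hAb hA n P hP =>
  (h A hAb hA n P hP).trans (mul_le_mul_of_nonneg_right hc ENNReal.toReal_nonneg)

section RiemannSum

variable {X : Type*} {ν : X → Set ℝ → ℝ}

theorem abs_sub_sum_Ioc_le (hν : ∀ x, IsBMeasure (ν x)) {l : Measure ℝ}
    [IsLocallyFiniteMeasure l] {s : ℕ → ℝ} {n : ℕ} (hs : MonotoneOn s (Iic n)) {x : X}
    {σ : ℕ → X} {K : ℝ} (hK : ∀ r < n, DiffLE (ν x) (ν (σ r)) K l) :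
    |ν x (Ioc (s 0) (s n)) - ∑ r ∈ Finset.range n, ν (σ r) (Ioc (s r) (s (r + 1)))| ≤
      K * l.real (Ioc (s 0) (s n)) := by
  rw [← sum_range_Ioc_telescope (hν x).empty (fun _ _ _ => (hν x).Ioc_union_Ioc) hs,
    ← sum_range_Ioc_telescope measureReal_empty (fun _ _ _ => measureReal_Ioc_union_Ioc) hs,
    ← Finset.sum_sub_distrib, Finset.mul_sum]
  exact (Finset.abs_sum_le_sum_abs _ _).trans <| Finset.sum_le_sum fun r hr =>
    (hK r (Finset.mem_range.1 hr)).abs_sub_le (Metric.isBounded_Ioc _ _) measurableSet_Ioc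

theorem riemannSum_eq_sum_Ioc (hν : ∀ x, IsBMeasure (ν x)) (y : ℝ → X) {a b : ℝ}
    (P : TaggedPartition a b) :
    RiemannSum ν y P = ∑ i ∈ Finset.range P.k, ν (y (P.tag i)) (Ioc (P.t i) (P.t (i + 1))) :=
  Finset.sum_congr rfl fun i hi => (hν _).Icc_eq_Ioc (P.lt i (Finset.mem_range.1 hi)).le

theorem abs_riemannSum_sub_riemannSum_refine_le (hν : ∀ x, IsBMeasure (ν x)) {l : Measure ℝ}
    [IsLocallyFiniteMeasure l] {y : ℝ → X} {K : ℝ}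
    {a b : ℝ} (P : TaggedPartition a b) {n : ℕ} (hn : 0 < n)
    (hK : ∀ i < P.k, ∀ s ∈ Icc (P.t i) (P.t (i + 1)), DiffLE (ν (y (P.tag i))) (ν (y s)) K l) :
    |RiemannSum ν y P - RiemannSum ν y (P.refine n hn)| ≤ K * l.real (Ioc a b) := by
  set T := P.refinePoint n
  have hcell : ∀ i < P.k, |ν (y (P.tag i)) (Ioc (P.t i) (P.t (i + 1))) -
      ∑ r ∈ Finset.range n, ν (y (T (n * i + r))) (Ioc (T (n * i + r)) (T (n * i + r + 1)))| ≤
        K * l.real (Ioc (P.t i) (P.t (i + 1))) := by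
    intro i hi
    have h := abs_sub_sum_Ioc_le hν (P.monotoneOn_refinePoint_mul_add hn hi) fun r hr =>
      hK i hi _ (P.refinePoint_mul_add_mem_Icc hn hi hr.le)
    rwa [add_zero, P.refinePoint_mul hn, ← Nat.mul_add_one, P.refinePoint_mul hn] at h
  have hl : l.real (Ioc a b) = ∑ i ∈ Finset.range P.k, l.real (Ioc (P.t i) (P.t (i + 1))) := by
    rw [sum_range_Ioc_telescope measureReal_empty (fun _ _ _ => measureReal_Ioc_union_Ioc)
      P.monotoneOn_t, P.left, P.right]
  rw [riemannSum_eq_sum_Ioc hν, riemannSum_eq_sum_Ioc hν]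
  change |_ - ∑ m ∈ Finset.range (n * P.k), _| ≤ _
  rw [Finset.sum_range_mul_eq_sum_sum, ← Finset.sum_sub_distrib, hl, Finset.mul_sum]
  exact (Finset.abs_sum_le_sum_abs _ _).trans
    (Finset.sum_le_sum fun i hi => hcell i (Finset.mem_range.1 hi))

end RiemannSum

theorem measureReal_Ioc_le_of_forall_measure_Icc_add_one_le {l : Measure ℝ} {c : ℝ} (hc : 0 ≤ c)
    (h : ∀ t, l (Icc t (t + 1)) ≤ ENNReal.ofReal c) (a b : ℝ) :
    l.real (Ioc a b) ≤ (⌊b - a⌋₊ + 1 : ℕ) * c := by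
  set M := ⌊b - a⌋₊ + 1
  have hcover : Ioc a b ⊆ ⋃ i ∈ Finset.range M, Icc (a + i) (a + i + 1) := by
    intro x hx
    have hxa : 0 ≤ x - a := by linarith [hx.1]
    have hxb : x - a ≤ b - a := by linarith [hx.2]
    refine mem_biUnion (Finset.mem_range.2 (Nat.lt_succ_of_le (Nat.floor_le_floor hxb))) ⟨?_, ?_⟩
    · linarith [Nat.floor_le hxa]
    · linarith [Nat.lt_floor_add_one (x - a)]
  refine ENNReal.toReal_le_of_le_ofReal (by positivity) ?_
  calc l (Ioc a b) ≤ ∑ i ∈ Finset.range M, l (Icc (a + i) (a + i + 1)) :=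
        (measure_mono hcover).trans (measure_biUnion_finset_le _ _)
    _ ≤ ∑ _i ∈ Finset.range M, ENNReal.ofReal c := Finset.sum_le_sum fun i _ => h _
    _ = ENNReal.ofReal (M * c) := by
        rw [Finset.sum_const, Finset.card_range, nsmul_eq_mul, ENNReal.ofReal_mul (by positivity),
          ENNReal.ofReal_natCast]

theorem IsModulusFamily.exists_pos_comp_lt {ω : ℕ → ℝ → ℝ} (hω : IsModulusFamily ω)
    {θ : ℝ → ℝ} (hθ : ContinuousWithinAt θ (Ici 0) 0) (hθ_zero : θ 0 = 0)
    (hθ_nonneg : ∀ x, 0 ≤ x → 0 ≤ θ x) (j : ℕ) {η : ℝ} (hη : 0 < η) : ∃ δ > 0, ω j (θ δ) < η := by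
  have hcont : ContinuousWithinAt (ω j ∘ θ) (Ici 0) 0 :=
    (hω.continuousOn j (θ 0) (hθ_nonneg 0 le_rfl)).comp hθ fun x hx => hθ_nonneg x hx
  have hlt : ∀ᶠ x in 𝓝[>] 0, ω j (θ x) < η :=
    nhdsWithin_mono _ Ioi_subset_Ici_self <|
      hcont.tendsto.eventually_lt_const (by simpa [hθ_zero, hω.map_zero] using hη)
  obtain ⟨δ, hδ, hδ_pos⟩ := (hlt.and self_mem_nhdsWithin).exists
  exact ⟨δ, hδ_pos, hδ⟩

theorem diffLE_of_mem_kSet {ω : ℕ → ℝ → ℝ} (hω : IsModulusFamily ω) {Θ : ℕ → ℚ → ℚ → ℝ → ℝ}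
    (hΘ : IsSuitableModuli Θ) {q₁ q₂ : ℚ} (hq : q₁ < q₂) {j : ℕ} {ν : E → Set ℝ → ℝ}
    {l : Measure ℝ} (hl : HasLBound (ω j) ν j l) {y : ℝ → E} (hy : y ∈ KSet E Θ j q₁ q₂)
    {s₁ s₂ δ : ℝ} (hs₁ : s₁ ∈ Icc (q₁ : ℝ) q₂) (hs₂ : s₂ ∈ Icc (q₁ : ℝ) q₂) (hδ : |s₁ - s₂| ≤ δ) :
    DiffLE (ν (y s₁)) (ν (y s₂)) (ω j (Θ j q₁ q₂ δ)) l := by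
  obtain ⟨-, hy_bdd, hy_mod⟩ := hy
  have hΘδ : ‖y s₁ - y s₂‖ ≤ Θ j q₁ q₂ δ := (hy_mod s₁ hs₁ s₂ hs₂).trans
    (hΘ.monotoneOn j q₁ q₂ hq (abs_nonneg (s₁ - s₂)) ((abs_nonneg _).trans hδ) hδ)
  exact (hl.2 _ _ (hy_bdd s₁ hs₁) (hy_bdd s₂ hs₂)).mono
    (hω.monotoneOn j (norm_nonneg _) ((norm_nonneg _).trans hΘδ) hΘδ)

theorem stmt9 {N : ℕ} {ι : Type*} (ω : ℕ → ℝ → ℝ) (hω : IsModulusFamily ω)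
    (Θ : ℕ → ℚ → ℚ → ℝ → ℝ) (hΘ : IsSuitableModuli Θ)
    (ν : ι → EuclideanSpace ℝ (Fin N) → Set ℝ → ℝ)
    (hν : ∀ α, IsParamBMeasure ω (ν α))
    (lB : ι → ℕ → Measure ℝ)
    (hlB : ∀ α j, 1 ≤ j → HasLBound (ω j) (ν α) j (lB α j))
    (hlbd : ∀ j, 1 ≤ j → ∃ c > (0 : ℝ), ∀ α, ∀ t : ℝ,
      lB α j (Set.Icc t (t + 1)) ≤ ENNReal.ofReal c)
    (q₁ q₂ : ℚ) (hq : q₁ < q₂) (j : ℕ) (hj : 1 ≤ j) :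
    ∀ ε > 0, ∃ δ > 0, ∀ P : TaggedPartition (q₁ : ℝ) (q₂ : ℝ), P.MeshLT δ →
      ∀ y ∈ KSet (EuclideanSpace ℝ (Fin N)) Θ j q₁ q₂, ∀ α, ∀ L : ℝ,
        IsCurveIntegral (ν α) y (q₁ : ℝ) (q₂ : ℝ) L →
        |L - RiemannSum (ν α) y P| < ε := by
  intro ε hε
  obtain ⟨c, hc, hc_bound⟩ := hlbd j hj
  set C : ℝ := (⌊(q₂ : ℝ) - q₁⌋₊ + 1 : ℕ) * c
  obtain ⟨δ, hδ, hωδ⟩ := hω.exists_pos_comp_lt (hΘ.continuousOn j q₁ q₂ hq 0 self_mem_Ici)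
    (hΘ.map_zero j q₁ q₂ hq) (fun x => hΘ.nonneg j q₁ q₂ x hq) j
    (div_pos (half_pos hε) (by positivity : 0 < C))
  refine ⟨δ, hδ, fun P hP y hy α L hL => ?_⟩
  obtain ⟨δ₀, hδ₀, hL⟩ := hL (ε / 2) (half_pos hε)
  obtain ⟨n, hn, hR⟩ := hP.exists_refine hδ₀
  have : IsLocallyFiniteMeasure (lB α j) := (hlB α j hj).1.1
  have hcmp := abs_riemannSum_sub_riemannSum_refine_le (hν α).1 P hn fun i hi s hs =>
    diffLE_of_mem_kSet hω hΘ hq (hlB α j hj) hy (P.Icc_subset_Icc_of_lt hi (P.tag_mem i hi))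
      (P.Icc_subset_Icc_of_lt hi hs) ((P.abs_tag_sub_le hi hs).trans (hP i hi).le)
  have hl := measureReal_Ioc_le_of_forall_measure_Icc_add_one_le hc.le (hc_bound α) q₁ q₂
  have hωδ_nonneg := hω.nonneg j _ (hΘ.nonneg j q₁ q₂ δ hq hδ.le)
  have hsplit : ω j (Θ j q₁ q₂ δ) * (lB α j).real (Ioc q₁ q₂) < ε / 2 :=
    (mul_le_mul_of_nonneg_left hl hωδ_nonneg).trans_lt ((lt_div_iff₀ (by positivity)).1 hωδ)
  calc |L - RiemannSum (ν α) y P|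
      ≤ |L - RiemannSum (ν α) y (P.refine n hn)|
        + |RiemannSum (ν α) y (P.refine n hn) - RiemannSum (ν α) y P| := abs_sub_le _ _ _
    _ < ε / 2 + ε / 2 :=
        add_lt_add (hL _ hR) (by rw [abs_sub_comm]; exact hcmp.trans_lt hsplit)
    _ = ε := add_halves ε
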